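/- arXiv:1209.2348 — 3 statements merged into one kernel-verified Lean document; each statement's English description precedes it below -/
import Mathlib

section
/- For an odd integer n, a circle of diameter n inscribed in an n×n grid of unit squares crosses the single middle square of the top row but no other square of the top row only if n < 5/4; hence this is impossible for odd n ≥ 3. -/
/-! For `n = 2m + 1 ≥ 3` the circle of radius `n / 2` meets the vertical line one unit to the right
of its centre at height `n / 2 + √(n² / 4 - 1) ∈ (n - 1, n)`, which lies inside the square
`[m + 1, m + 2] × [n - 1, n]` of the top row, a neighbour of the middle one. -/

lemma exists_point_on_circle_within_one_of_top {a b r t : ℝ} (ht₀ : t ≠ 0) (ht : t ^ 2 < 2 * r - 1) :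
    ∃ p : ℝ × ℝ, (p.1 - a) ^ 2 + (p.2 - b) ^ 2 = r ^ 2 ∧
      p.1 = a + t ∧ b + r - 1 < p.2 ∧ p.2 < b + r := by
  have hr : 0 < r := by nlinarith [sq_nonneg t]
  have hnonneg : 0 ≤ r ^ 2 - t ^ 2 := by nlinarith [sq_nonneg (r - 1)]
  have hsq : √(r ^ 2 - t ^ 2) ^ 2 = r ^ 2 - t ^ 2 := Real.sq_sqrt hnonneg
  have hlt : √(r ^ 2 - t ^ 2) < r :=
    (Real.sqrt_lt' hr).2 (by nlinarith [pow_pos (abs_pos.2 ht₀) 2, sq_abs t])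
  have hgt : r - 1 < √(r ^ 2 - t ^ 2) :=
    Real.lt_sqrt_of_sq_lt (by nlinarith)
  refine ⟨(a + t, b + √(r ^ 2 - t ^ 2)), ?_, rfl, ?_, ?_⟩
  · simp only
    nlinarith
  · simp only
    linarith
  · simp only
    linarith

theorem sagan_stmt_1_general (n : ℕ) (hodd : Odd n)
    (hother : ∀ k : ℕ, 1 ≤ k → k ≤ n → 2 * k ≠ n + 1 →
      ¬ ∃ p : ℝ × ℝ,
        (p.1 - n / 2) ^ 2 + (p.2 - n / 2) ^ 2 = ((n : ℝ) / 2) ^ 2 ∧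
        (k : ℝ) - 1 < p.1 ∧ p.1 < (k : ℝ) ∧
        (n : ℝ) - 1 < p.2 ∧ p.2 < n) :
    (n : ℝ) < 5 / 4 := by
  by_contra! hn
  obtain ⟨m, rfl⟩ := hodd
  have hm : 1 ≤ m := by
    by_contra! hm
    interval_cases m
    norm_num at hn
  have hm' : (1 : ℝ) ≤ m := by exact_mod_cast hm
  set r : ℝ := ((2 * m + 1 : ℕ) : ℝ) / 2 with hr
  have hr' : r = m + 1 / 2 := by rw [hr]; push_cast; ring
  obtain ⟨p, hcircle, hp₁, hp₂, hp₂'⟩ :=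
    exists_point_on_circle_within_one_of_top (a := r) (b := r) (t := 1) one_ne_zero (by linarith)
  refine hother (m + 2) (by omega) (by omega) (by omega) ⟨p, hcircle, ?_, ?_, ?_, ?_⟩ <;>
    push_cast <;> linarith

/-- For odd `n`, if the circle of diameter `n` inscribed in the `n × n` grid of
unit squares crosses (intersects the interior of) the middle square of the top
row but no other square of the top row, then `n < 5/4`. -/
theorem sagan_stmt_1 (n : ℕ) (hodd : Odd n)
    (hmid : ∃ p : ℝ × ℝ,
      (p.1 - n / 2) ^ 2 + (p.2 - n / 2) ^ 2 = ((n : ℝ) / 2) ^ 2 ∧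
      ((n : ℝ) - 1) / 2 < p.1 ∧ p.1 < ((n : ℝ) + 1) / 2 ∧
      (n : ℝ) - 1 < p.2 ∧ p.2 < n)
    (hother : ∀ k : ℕ, 1 ≤ k → k ≤ n → 2 * k ≠ n + 1 →
      ¬ ∃ p : ℝ × ℝ,
        (p.1 - n / 2) ^ 2 + (p.2 - n / 2) ^ 2 = ((n : ℝ) / 2) ^ 2 ∧
        (k : ℝ) - 1 < p.1 ∧ p.1 < (k : ℝ) ∧
        (n : ℝ) - 1 < p.2 ∧ p.2 < n) :
    (n : ℝ) < 5 / 4 :=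
  sagan_stmt_1_general n hodd hother
end

section
/- A circle of diameter 2n−1 drawn symmetrically on a 2n×2n chessboard crosses exactly 8n − 4 cells of the board (i.e., contains a segment of the circle in exactly 8n−4 cells). -/
/-!
By the reflection symmetries of the board it suffices to count the cells of one quadrant, indexed
by the offset `(a, b) ∈ [0, n)²` of their nearest corner from the centre. Such a cell meets the
circle iff its nearest corner lies strictly inside it and its farthest corner `(a + 1, b + 1)`
strictly outside; as the diameter is odd, no lattice point lies on the circle. The set `D` of
lattice points inside is closed under `(a + 1, b + 1) ↦ (a, b)`, so the diagonal shift matches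
`{p ∈ D | p + (1, 1) ∈ D}` with the points of `D` off the axes, and the quadrant count is the
number of points of `D` on the two axes, `2n - 1`.
-/

def cellOffset (n i : ℕ) : ℕ := if i < n then n - 1 - i else i - n

theorem cellOffset_of_lt {n i : ℕ} (h : i < n) : cellOffset n i = n - 1 - i := if_pos h

theorem cellOffset_of_le {n i : ℕ} (h : n ≤ i) : cellOffset n i = i - n := if_neg h.not_gt

section

open Set

theorem exists_sq_add_sq_eq_iff {a a' b b' r : ℝ} (ha : 0 ≤ a) (haa' : a < a') (hb : 0 ≤ b)
    (hbb' : b < b') :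
    (∃ u ∈ Ioo a a', ∃ v ∈ Ioo b b', u ^ 2 + v ^ 2 = r) ↔
      a ^ 2 + b ^ 2 < r ∧ r < a' ^ 2 + b' ^ 2 := by
  constructor
  · rintro ⟨u, ⟨hau, hua'⟩, v, ⟨hbv, hvb'⟩, rfl⟩
    constructor <;> nlinarith
  · rintro ⟨hlo, hhi⟩
    set g : ℝ → ℝ := fun t => ((1 - t) * a + t * a') ^ 2 + ((1 - t) * b + t * b') ^ 2
    have hg : ContinuousOn g (Icc 0 1) := by fun_prop
    obtain ⟨t, ⟨ht0, ht1⟩, hgt⟩ :=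
      intermediate_value_Ioo zero_le_one hg (by simpa [g] using And.intro hlo hhi)
    exact ⟨_, ⟨by nlinarith, by nlinarith⟩, _, ⟨by nlinarith, by nlinarith⟩, hgt⟩

theorem image_abs_sub_Ioo (n i : ℕ) :
    (fun x : ℝ => |x - n|) '' Ioo (i : ℝ) (i + 1) =
      Ioo (cellOffset n i : ℝ) (cellOffset n i + 1) := by
  rcases lt_or_ge i n with h | h
  · have hcast : (cellOffset n i : ℝ) = n - (i + 1) := by
      rw [cellOffset_of_lt h, Nat.sub_sub, Nat.cast_sub (by omega)]; push_cast; ring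
    have hi : (i : ℝ) + 1 ≤ n := by exact_mod_cast h
    rw [EqOn.image_eq (f₂ := fun x : ℝ => n - x), image_const_sub_Ioo, hcast]
    · ring_nf
    · intro x hx; simp only [abs_of_neg (by linarith [hx.2] : x - n < 0)]; ring
  · have hcast : (cellOffset n i : ℝ) = i - n := by
      rw [cellOffset_of_le h, Nat.cast_sub h]
    have hi : (n : ℝ) ≤ i := by exact_mod_cast h
    rw [EqOn.image_eq (f₂ := fun x : ℝ => x - n), image_sub_const_Ioo, hcast]
    · ring_nf
    · intro x hx; exact abs_of_pos (by linarith [hx.1])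

theorem exists_mem_cell_iff (n i j : ℕ) (r : ℝ) :
    (∃ p : ℝ × ℝ, (p.1 - n) ^ 2 + (p.2 - n) ^ 2 = r ∧
        (i : ℝ) < p.1 ∧ p.1 < i + 1 ∧ (j : ℝ) < p.2 ∧ p.2 < j + 1) ↔
      (cellOffset n i : ℝ) ^ 2 + (cellOffset n j : ℝ) ^ 2 < r ∧
        r < ((cellOffset n i : ℝ) + 1) ^ 2 + ((cellOffset n j : ℝ) + 1) ^ 2 := by
  rw [← exists_sq_add_sq_eq_iff (by positivity) (lt_add_one _) (by positivity) (lt_add_one _),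
    ← image_abs_sub_Ioo, ← image_abs_sub_Ioo]
  simp only [exists_mem_image, sq_abs, Prod.exists, mem_Ioo]
  aesop

end

open Finset

theorem sum_range_two_mul_cellOffset {M : Type*} [AddCommMonoid M] (n : ℕ) (g : ℕ → M) :
    ∑ i ∈ range (2 * n), g (cellOffset n i) = 2 • ∑ a ∈ range n, g a := by
  rw [two_mul, sum_range_add, two_nsmul]
  congr 1
  · rw [← sum_range_reflect g]
    exact sum_congr rfl fun i hi => by rw [cellOffset_of_lt (mem_range.1 hi)]
  · exact sum_congr rfl fun i _ => by rw [cellOffset_of_le (by omega), Nat.add_sub_cancel_left]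

theorem card_filter_cellOffset (n : ℕ) (P : ℕ → ℕ → Prop) [DecidableRel P] :
    #{c ∈ range (2 * n) ×ˢ range (2 * n) | P (cellOffset n c.1) (cellOffset n c.2)} =
      4 * #{q ∈ range n ×ˢ range n | P q.1 q.2} := by
  simp only [card_filter, sum_product]
  calc ∑ i ∈ range (2 * n), ∑ j ∈ range (2 * n),
        (if P (cellOffset n i) (cellOffset n j) then 1 else 0)
      = ∑ i ∈ range (2 * n), 2 * ∑ b ∈ range n, (if P (cellOffset n i) b then 1 else 0) :=
        sum_congr rfl fun i _ =>
          sum_range_two_mul_cellOffset n fun b => if P (cellOffset n i) b then 1 else 0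
    _ = 4 * ∑ a ∈ range n, ∑ b ∈ range n, (if P a b then 1 else 0) := by
        rw [← mul_sum,
          sum_range_two_mul_cellOffset n fun a => ∑ b ∈ range n, if P a b then 1 else 0,
          smul_eq_mul, ← mul_assoc]
        rfl

theorem card_filter_succ_succ_notMem {S : Finset (ℕ × ℕ)}
    (hS : ∀ p : ℕ × ℕ, (p.1 + 1, p.2 + 1) ∈ S → p ∈ S) :
    #{p ∈ S | (p.1 + 1, p.2 + 1) ∉ S} = #{p ∈ S | p.1 = 0 ∨ p.2 = 0} := by
  have hshift : #{p ∈ S | (p.1 + 1, p.2 + 1) ∈ S} = #{p ∈ S | ¬(p.1 = 0 ∨ p.2 = 0)} := by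
    refine card_nbij' (fun p => (p.1 + 1, p.2 + 1)) (fun p => (p.1 - 1, p.2 - 1)) ?_ ?_ ?_ ?_
    · intro p hp; simp_all
    · intro p hp
      simp only [coe_filter, Set.mem_ofPred_eq, not_or] at hp ⊢
      have : (p.1 - 1 + 1, p.2 - 1 + 1) = p := by ext <;> simp <;> omega
      exact ⟨hS _ (this ▸ hp.1), this ▸ hp.1⟩
    · intro p _; simp
    · intro p hp
      simp only [coe_filter, Set.mem_ofPred_eq, not_or] at hp
      ext <;> simp <;> omega
  have h1 := card_filter_add_card_filter_not (s := S) fun p => (p.1 + 1, p.2 + 1) ∈ S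
  have h2 := card_filter_add_card_filter_not (s := S) fun p => p.1 = 0 ∨ p.2 = 0
  omega

def latticeDisk (m : ℕ) : Finset (ℕ × ℕ) :=
  {p ∈ range m ×ˢ range m | 4 * (p.1 ^ 2 + p.2 ^ 2) < m ^ 2}

theorem mem_latticeDisk {m : ℕ} {p : ℕ × ℕ} :
    p ∈ latticeDisk m ↔ 4 * (p.1 ^ 2 + p.2 ^ 2) < m ^ 2 := by
  simp only [latticeDisk, mem_filter, mem_product, mem_range, and_iff_right_iff_imp]
  intro h
  constructor <;> exact (Nat.pow_lt_pow_iff_left two_ne_zero).1 (by nlinarith)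

theorem four_mul_sq_lt_sq_iff {a n : ℕ} : 4 * a ^ 2 < (2 * n - 1) ^ 2 ↔ a < n := by
  rw [show 4 * a ^ 2 = (2 * a) ^ 2 by ring, Nat.pow_lt_pow_iff_left two_ne_zero]
  omega

theorem card_filter_axis_latticeDisk (n : ℕ) :
    #{p ∈ latticeDisk (2 * n - 1) | p.1 = 0 ∨ p.2 = 0} = 2 * n - 1 := by
  have haxes : {p ∈ latticeDisk (2 * n - 1) | p.1 = 0 ∨ p.2 = 0} =
      {0} ×ˢ range n ∪ Ico 1 n ×ˢ {0} := by
    ext ⟨a, b⟩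
    simp only [mem_filter, mem_latticeDisk, mem_union, mem_product, mem_singleton, mem_range,
      mem_Ico]
    constructor
    · rintro ⟨h, rfl | rfl⟩
      · simp_all [four_mul_sq_lt_sq_iff]
      · have := four_mul_sq_lt_sq_iff.1 (by simpa using h)
        omega
    · rintro (⟨rfl, hb⟩ | ⟨⟨-, ha⟩, rfl⟩) <;> simp_all [four_mul_sq_lt_sq_iff]
  rw [haxes, card_union_of_disjoint, card_product, card_product]
  · simp; omega
  · simp only [disjoint_left, mem_product, mem_singleton, mem_range, mem_Ico]
    omega

theorem card_quadrant_cells_meeting_circle {n : ℕ} (hn : 0 < n) :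
    #{q ∈ range n ×ˢ range n | 4 * (q.1 ^ 2 + q.2 ^ 2) < (2 * n - 1) ^ 2 ∧
      (2 * n - 1) ^ 2 < 4 * ((q.1 + 1) ^ 2 + (q.2 + 1) ^ 2)} = 2 * n - 1 := by
  -- the square of the odd diameter is never divisible by 4, so no lattice point lies on the circle
  obtain ⟨k, hk⟩ : ∃ k, (2 * n - 1) ^ 2 = 4 * k + 1 := by
    obtain ⟨n, rfl⟩ := Nat.exists_eq_succ_of_ne_zero hn.ne'
    exact ⟨n ^ 2 + n, by rw [show 2 * (n + 1) - 1 = 2 * n + 1 by omega]; ring⟩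
  have hcells : {q ∈ range n ×ˢ range n | 4 * (q.1 ^ 2 + q.2 ^ 2) < (2 * n - 1) ^ 2 ∧
      (2 * n - 1) ^ 2 < 4 * ((q.1 + 1) ^ 2 + (q.2 + 1) ^ 2)} =
      {p ∈ latticeDisk (2 * n - 1) | (p.1 + 1, p.2 + 1) ∉ latticeDisk (2 * n - 1)} := by
    ext ⟨a, b⟩
    simp only [mem_filter, mem_product, mem_range, mem_latticeDisk]
    constructor
    · rintro ⟨-, hin, hout⟩
      omega
    · rintro ⟨hin, hout⟩
      have ha : a < n := four_mul_sq_lt_sq_iff.1 (by nlinarith)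
      have hb : b < n := four_mul_sq_lt_sq_iff.1 (by nlinarith)
      omega
  rw [hcells, card_filter_succ_succ_notMem, card_filter_axis_latticeDisk]
  intro p hp
  rw [mem_latticeDisk] at hp ⊢
  exact lt_of_le_of_lt (by gcongr <;> omega) hp

theorem exists_mem_cell_iff_of_diam (n m i j : ℕ) :
    (∃ p : ℝ × ℝ, (p.1 - n) ^ 2 + (p.2 - n) ^ 2 = ((m : ℝ) / 2) ^ 2 ∧
        (i : ℝ) < p.1 ∧ p.1 < i + 1 ∧ (j : ℝ) < p.2 ∧ p.2 < j + 1) ↔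
      4 * (cellOffset n i ^ 2 + cellOffset n j ^ 2) < m ^ 2 ∧
        m ^ 2 < 4 * ((cellOffset n i + 1) ^ 2 + (cellOffset n j + 1) ^ 2) := by
  rw [exists_mem_cell_iff, div_pow, lt_div_iff₀ (by norm_num), div_lt_iff₀ (by norm_num)]
  norm_cast
  ring_nf

/-- A circle of diameter `2n - 1` drawn symmetrically on a `2n × 2n` chessboard
contains a segment of the circle (intersects the interior) in exactly `8n - 4`
cells of the board. -/
theorem sagan_stmt_5 (n : ℕ) (hn : 1 ≤ n) :
    {c : ℕ × ℕ | c.1 < 2 * n ∧ c.2 < 2 * n ∧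
      ∃ p : ℝ × ℝ,
        (p.1 - n) ^ 2 + (p.2 - n) ^ 2 = ((2 * (n : ℝ) - 1) / 2) ^ 2 ∧
        (c.1 : ℝ) < p.1 ∧ p.1 < (c.1 : ℝ) + 1 ∧
        (c.2 : ℝ) < p.2 ∧ p.2 < (c.2 : ℝ) + 1}.ncard = 8 * n - 4 := by
  have hdiam : 2 * (n : ℝ) - 1 = ((2 * n - 1 : ℕ) : ℝ) := by
    rw [Nat.cast_sub (by omega)]; push_cast; ring
  calc _ = #{c ∈ range (2 * n) ×ˢ range (2 * n) |
          4 * (cellOffset n c.1 ^ 2 + cellOffset n c.2 ^ 2) < (2 * n - 1) ^ 2 ∧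
          (2 * n - 1) ^ 2 < 4 * ((cellOffset n c.1 + 1) ^ 2 + (cellOffset n c.2 + 1) ^ 2)} := by
        rw [← Set.ncard_coe_finset]
        congr 1
        ext ⟨i, j⟩
        simp only [Set.mem_ofPred_eq, coe_filter, mem_product, mem_range, hdiam,
          exists_mem_cell_iff_of_diam, and_assoc]
    _ = 4 * (2 * n - 1) := by
        refine (card_filter_cellOffset n fun a b => 4 * (a ^ 2 + b ^ 2) < (2 * n - 1) ^ 2 ∧
          (2 * n - 1) ^ 2 < 4 * ((a + 1) ^ 2 + (b + 1) ^ 2)).trans ?_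
        rw [card_quadrant_cells_meeting_circle hn]
    _ = 8 * n - 4 := by omega
end

section
/- The BBP formula holds: π = Σ_{k=0}^{∞} 16^{−k} ( 4/(8k+1) − 2/(8k+4) − 1/(8k+5) − 1/(8k+6) ). -/
/-!
With `p y = 4 - 2y³ - y⁴ - y⁵`, the `k`-th BBP summand is `∫₀¹ (y⁸/16)ᵏ p y dy`, since
`∫₀¹ y^(8k+j) dy = 1/(8k+j+1)`. On `[0, 1]` the ratio `y⁸/16` is at most `1/16`, so dominated
convergence lets us sum the geometric series under the integral, and the series equals
`∫₀¹ p y / (1 - y⁸/16) dy`. This rational function has an elementary antiderivative built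
from logarithms and an arctangent, and evaluating it at the endpoints gives `π`.
-/

open Real Set

theorem intervalIntegral.hasSum_integral_pow_mul {a b c : ℝ} {q g : ℝ → ℝ}
    (hq : Continuous q) (hg : Continuous g) (hc : c < 1) (hqc : ∀ x ∈ uIcc a b, |q x| ≤ c) :
    HasSum (fun k : ℕ => ∫ x in a..b, q x ^ k * g x) (∫ x in a..b, g x / (1 - q x)) := by
  have hc0 : 0 ≤ c := (abs_nonneg _).trans (hqc a left_mem_uIcc)
  have hgeom : Summable fun k : ℕ => c ^ k := summable_geometric_of_lt_one hc0 hc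
  refine intervalIntegral.hasSum_integral_of_dominated_convergence (fun k x => c ^ k * |g x|)
    (fun k => by fun_prop) (fun k => .of_forall fun x hx => ?_)
    (.of_forall fun x _ => hgeom.mul_right _) ?_ (.of_forall fun x hx => ?_)
  · rw [norm_mul, norm_pow, Real.norm_eq_abs, Real.norm_eq_abs]
    gcongr
    exact hqc x (uIoc_subset_uIcc hx)
  · simp_rw [tsum_mul_right]
    exact (continuous_const.mul hg.abs).intervalIntegrable a b
  · have hqx : ‖q x‖ < 1 := (hqc x (uIoc_subset_uIcc hx)).trans_lt hc
    simpa [div_eq_inv_mul] using (hasSum_geometric_of_norm_lt_one hqx).mul_right (g x)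

/-- `p y / (1 - y⁸/16) = 16 (1 - y) / ((2 - y²)(y² - 2y + 2))`; its partial fractions integrate
to these three terms. -/
noncomputable def bbpAntideriv (y : ℝ) : ℝ :=
  2 * log (2 - y ^ 2) - 2 * log (y ^ 2 - 2 * y + 2) + 4 * arctan (y - 1)

theorem hasDerivAt_bbpAntideriv {y : ℝ} (hy : y ^ 2 ≠ 2) :
    HasDerivAt bbpAntideriv ((4 - 2 * y ^ 3 - y ^ 4 - y ^ 5) / (1 - y ^ 8 / 16)) y := by
  have h₁ : 2 - y ^ 2 ≠ 0 := sub_ne_zero.mpr hy.symm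
  have h₂ : y ^ 2 - 2 * y + 2 ≠ 0 := by nlinarith [sq_nonneg (y - 1)]
  have h₃ : 16 - y ^ 8 ≠ 0 := by
    rw [show 16 - y ^ 8 = (2 - y ^ 2) * (2 + y ^ 2) * (4 + y ^ 4) by ring]
    positivity
  have hlog₁ : HasDerivAt (fun y : ℝ => log (2 - y ^ 2)) (-(2 * y) / (2 - y ^ 2)) y := by
    simpa using ((hasDerivAt_pow 2 y).const_sub 2).log h₁
  have hlog₂ : HasDerivAt (fun y : ℝ => log (y ^ 2 - 2 * y + 2))
      ((2 * y - 2) / (y ^ 2 - 2 * y + 2)) y := by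
    simpa using (((hasDerivAt_pow 2 y).sub ((hasDerivAt_id y).const_mul 2)).add_const 2).log h₂
  have harctan : HasDerivAt (fun y : ℝ => arctan (y - 1)) (1 / (1 + (y - 1) ^ 2)) y := by
    simpa using ((hasDerivAt_id y).sub_const 1).arctan
  refine (((hlog₁.const_mul 2).sub (hlog₂.const_mul 2)).add
    (harctan.const_mul 4)).congr_deriv ?_
  have h₄ : y * (y - 2) + 2 ≠ 0 := by nlinarith [sq_nonneg (y - 1)]
  field_simp
  ring

theorem integral_bbp :
    ∫ y in (0 : ℝ)..1, (4 - 2 * y ^ 3 - y ^ 4 - y ^ 5) / (1 - y ^ 8 / 16) = π := by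
  have hderiv : ∀ y ∈ uIcc (0 : ℝ) 1, HasDerivAt bbpAntideriv
      ((4 - 2 * y ^ 3 - y ^ 4 - y ^ 5) / (1 - y ^ 8 / 16)) y := by
    intro y hy
    rw [uIcc_of_le zero_le_one] at hy
    exact hasDerivAt_bbpAntideriv (by nlinarith [hy.1, hy.2])
  have hcont : ContinuousOn (fun y : ℝ => (4 - 2 * y ^ 3 - y ^ 4 - y ^ 5) / (1 - y ^ 8 / 16))
      (uIcc 0 1) := by
    refine ContinuousOn.div (by fun_prop) (by fun_prop) fun y hy => ?_
    rw [uIcc_of_le zero_le_one] at hy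
    nlinarith [pow_le_one₀ hy.1 hy.2 (n := 8)]
  rw [intervalIntegral.integral_eq_sub_of_hasDerivAt hderiv hcont.intervalIntegrable]
  norm_num [bbpAntideriv, arctan_neg, arctan_one]
  ring

theorem integral_bbp_term (k : ℕ) :
    ∫ y in (0 : ℝ)..1, (y ^ 8 / 16) ^ k * (4 - 2 * y ^ 3 - y ^ 4 - y ^ 5) =
      (1 / 16 ^ k : ℝ) *
        (4 / (8 * k + 1) - 2 / (8 * k + 4) - 1 / (8 * k + 5) - 1 / (8 * k + 6)) := by
  have hexpand : (fun y : ℝ => (y ^ 8 / 16) ^ k * (4 - 2 * y ^ 3 - y ^ 4 - y ^ 5)) = fun y =>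
      (1 / 16 ^ k : ℝ) *
        (4 * y ^ (8 * k) - 2 * y ^ (8 * k + 3) - y ^ (8 * k + 4) - y ^ (8 * k + 5)) := by
    funext y
    rw [div_pow, ← pow_mul]
    ring
  rw [hexpand, intervalIntegral.integral_const_mul, intervalIntegral.integral_sub,
    intervalIntegral.integral_sub, intervalIntegral.integral_sub,
    intervalIntegral.integral_const_mul, intervalIntegral.integral_const_mul,
    integral_pow, integral_pow, integral_pow, integral_pow]
  · push_cast
    ring
  all_goals exact Continuous.intervalIntegrable (by fun_prop) 0 1

/-- The Bailey–Borwein–Plouffe formula: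
`π = Σ_{k=0}^{∞} 16⁻ᵏ (4/(8k+1) − 2/(8k+4) − 1/(8k+5) − 1/(8k+6))`. -/
theorem sagan_stmt_12 :
    Real.pi = ∑' k : ℕ, (1 / 16 ^ k : ℝ) *
      (4 / (8 * k + 1) - 2 / (8 * k + 4) - 1 / (8 * k + 5) - 1 / (8 * k + 6)) := by
  have hratio : ∀ y ∈ uIcc (0 : ℝ) 1, |y ^ 8 / 16| ≤ 1 / 16 := by
    intro y hy
    rw [uIcc_of_le zero_le_one] at hy
    rw [abs_of_nonneg (by positivity)]
    gcongr
    exact pow_le_one₀ hy.1 hy.2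
  have hsum := intervalIntegral.hasSum_integral_pow_mul (by fun_prop) (by fun_prop)
    (by norm_num) hratio (g := fun y => 4 - 2 * y ^ 3 - y ^ 4 - y ^ 5)
  simp only [integral_bbp_term, integral_bbp] at hsum
  exact hsum.tsum_eq.symm
end
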